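/- Let n ≥ 1 and let A = {2, 4, 8, ..., 2ⁿ}. Setting D = A - A, one has n²/2 ≤ |D| ≤ n², and both |DD| ≤ 25|D|^{3/2} and |D/D| ≤ 25|D|^{3/2}, where DD = {de : d, e ∈ D} and D/D = {d/e : d, e ∈ D, e ≠ 0}. -/

import Mathlib

open Finset

/-- The difference set A - A. -/
noncomputable def diffSet (A : Finset ℝ) : Finset ℝ :=
  (A ×ˢ A).image (fun p => p.1 - p.2)

/-- The product set X·Y. -/
noncomputable def prodSet (X Y : Finset ℝ) : Finset ℝ :=
  (X ×ˢ Y).image (fun p => p.1 * p.2)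

/-- The quotient set X/Y (excluding division by zero). -/
noncomputable def quotSet (X Y : Finset ℝ) : Finset ℝ :=
  ((X ×ˢ Y).filter (fun p => p.2 ≠ 0)).image (fun p => p.1 / p.2)

/-!
Every nonzero element of `D = A - A` has the form `±2^j (2^m - 1)` with `1 ≤ j, m ≤ n`. Hence the
nonzero elements of `DD` and `D/D` are `±2^a (2^m - 1)^{±1} (2^m' - 1)^{±1}`, where `a` ranges over
`O(n)` values, so `|DD|, |D/D| = O(n³)`. On the other hand the differences `2^i - 2^j`, `i ≠ j`, are
pairwise distinct, since the leading binary digit of `|2^i - 2^j|` is `max(i, j)`; thus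
`|D| = n² - n + 1 ≥ n²/2` and `n³ = O(|D|^{3/2})`.
-/

open scoped Pointwise

lemma diffSet_eq_sub (A : Finset ℝ) : diffSet A = A - A :=
  (Finset.sub_def).symm

lemma prodSet_eq_mul (X Y : Finset ℝ) : prodSet X Y = X * Y :=
  (Finset.mul_def).symm

lemma prodSet_subset_insert_zero {X Y S T : Finset ℝ} (hX : X ⊆ insert 0 S)
    (hY : Y ⊆ insert 0 T) : prodSet X Y ⊆ insert 0 (S * T) := by
  rw [prodSet_eq_mul, mul_subset_iff]
  intro x hx y hy
  rcases mem_insert.1 (hX hx) with rfl | hxS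
  · simp
  rcases mem_insert.1 (hY hy) with rfl | hyT
  · simp
  exact mem_insert_of_mem (mul_mem_mul hxS hyT)

lemma quotSet_subset_insert_zero {X Y S T : Finset ℝ} (hX : X ⊆ insert 0 S)
    (hY : Y ⊆ insert 0 T) : quotSet X Y ⊆ insert 0 (S / T) := by
  intro z hz
  simp only [quotSet, mem_image, mem_filter, mem_product, Prod.exists] at hz
  obtain ⟨x, y, ⟨⟨hx, hy⟩, hy0⟩, rfl⟩ := hz
  rcases mem_insert.1 (hX hx) with rfl | hxS
  · simp
  rcases mem_insert.1 (hY hy) with rfl | hyT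
  · exact absurd rfl hy0
  exact mem_insert_of_mem (div_mem_div hxS hyT)

noncomputable def powersOfTwo (n : ℕ) : Finset ℝ :=
  (Icc 1 n).image fun k : ℕ => (2 : ℝ) ^ k

noncomputable def twoPowSubOne (n : ℕ) : Finset ℝ :=
  (Icc 1 n).image fun k : ℕ => (2 : ℝ) ^ k - 1

noncomputable def signs : Finset ℝ := {-1, 1}

lemma mem_diffSet_powersOfTwo {n : ℕ} {x : ℝ} :
    x ∈ diffSet (powersOfTwo n) ↔ ∃ i ∈ Icc 1 n, ∃ j ∈ Icc 1 n, (2 : ℝ) ^ i - 2 ^ j = x := by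
  simp only [diffSet, powersOfTwo, mem_image, mem_product, Prod.exists]
  constructor
  · rintro ⟨_, _, ⟨⟨i, hi, rfl⟩, ⟨j, hj, rfl⟩⟩, rfl⟩
    exact ⟨i, hi, j, hj, rfl⟩
  · rintro ⟨i, hi, j, hj, rfl⟩
    exact ⟨_, _, ⟨⟨i, hi, rfl⟩, ⟨j, hj, rfl⟩⟩, rfl⟩

lemma two_pow_sub_two_pow_of_lt {i j : ℕ} (h : j < i) :
    (2 : ℝ) ^ i - 2 ^ j = 2 ^ j * (2 ^ (i - j) - 1) := by
  rw [mul_sub, ← pow_add, Nat.add_sub_cancel' h.le, mul_one]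

lemma diffSet_powersOfTwo_subset (n : ℕ) :
    diffSet (powersOfTwo n) ⊆ insert 0 (signs * powersOfTwo n * twoPowSubOne n) := by
  intro x hx
  obtain ⟨i, hi, j, hj, rfl⟩ := mem_diffSet_powersOfTwo.1 hx
  rw [mem_Icc] at hi hj
  have hsub {a b : ℕ} (hba : b < a) (ha : a ≤ n) (hb : 1 ≤ b) :
      (2 : ℝ) ^ a - 2 ^ b ∈ powersOfTwo n * twoPowSubOne n := by
    rw [two_pow_sub_two_pow_of_lt hba]
    exact mul_mem_mul (mem_image_of_mem _ (mem_Icc.2 ⟨hb, by omega⟩))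
      (mem_image_of_mem _ (mem_Icc.2 ⟨by omega, by omega⟩))
  rcases lt_trichotomy j i with hji | rfl | hij
  · refine mem_insert_of_mem ?_
    rw [mul_assoc, ← one_mul ((2 : ℝ) ^ i - 2 ^ j)]
    exact mul_mem_mul (by simp [signs]) (hsub hji hi.2 hj.1)
  · simp
  · refine mem_insert_of_mem ?_
    rw [mul_assoc, show (2 : ℝ) ^ i - 2 ^ j = -1 * (2 ^ j - 2 ^ i) by ring]
    exact mul_mem_mul (by simp [signs]) (hsub hij hj.2 hi.1)

lemma two_pow_le_two_mul_two_pow_sub_two_pow {i j : ℕ} (h : j < i) :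
    (2 : ℝ) ^ i ≤ 2 * (2 ^ i - 2 ^ j) := by
  have : (2 : ℝ) ^ (j + 1) ≤ 2 ^ i := pow_le_pow_right₀ one_le_two h
  rw [pow_succ] at this
  linarith

/-- `2^i - 2^j` lies in `[2^(i-1), 2^i)`, so its leading binary digit recovers `i`. -/
lemma eq_of_two_pow_sub_two_pow_eq_of_lt {i j k l : ℕ} (hji : j < i) (hlk : l < k)
    (h : (2 : ℝ) ^ i - 2 ^ j = 2 ^ k - 2 ^ l) : i = k ∧ j = l := by
  have hlt {a b : ℕ} : (2 : ℝ) ^ a < 2 ^ b ↔ a < b := pow_lt_pow_iff_right₀ one_lt_two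
  have hik : i < k + 1 := hlt.1 <| calc
    (2 : ℝ) ^ i ≤ 2 * (2 ^ i - 2 ^ j) := two_pow_le_two_mul_two_pow_sub_two_pow hji
    _ = 2 * (2 ^ k - 2 ^ l) := by rw [h]
    _ < 2 ^ (k + 1) := by rw [pow_succ]; linarith [pow_pos (zero_lt_two' ℝ) l]
  have hki : k < i + 1 := hlt.1 <| calc
    (2 : ℝ) ^ k ≤ 2 * (2 ^ k - 2 ^ l) := two_pow_le_two_mul_two_pow_sub_two_pow hlk
    _ = 2 * (2 ^ i - 2 ^ j) := by rw [h]
    _ < 2 ^ (i + 1) := by rw [pow_succ]; linarith [pow_pos (zero_lt_two' ℝ) j]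
  obtain rfl : i = k := by omega
  exact ⟨rfl, pow_right_injective₀ zero_lt_two (by norm_num : (2 : ℝ) ≠ 1) (by linarith)⟩

lemma two_pow_sub_two_pow_injOn :
    Set.InjOn (fun p : ℕ × ℕ => (2 : ℝ) ^ p.1 - 2 ^ p.2) {p | p.1 ≠ p.2} := by
  rintro ⟨i, j⟩ hij ⟨k, l⟩ hkl h
  simp only [Set.mem_ofPred_eq] at hij hkl h
  have hlt {a b : ℕ} : (2 : ℝ) ^ a < 2 ^ b ↔ a < b := pow_lt_pow_iff_right₀ one_lt_two
  rcases hij.lt_or_gt with hij | hji <;> rcases hkl.lt_or_gt with hkl | hlk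
  · obtain ⟨rfl, rfl⟩ := eq_of_two_pow_sub_two_pow_eq_of_lt hij hkl (by linarith)
    rfl
  · linarith [hlt.2 hij, hlt.2 hlk]
  · linarith [hlt.2 hji, hlt.2 hkl]
  · obtain ⟨rfl, rfl⟩ := eq_of_two_pow_sub_two_pow_eq_of_lt hji hlk h
    rfl

lemma card_diffSet_powersOfTwo_ge {n : ℕ} (hn : 1 ≤ n) :
    n * n - n + 1 ≤ #(diffSet (powersOfTwo n)) := by
  set f := fun p : ℕ × ℕ => (2 : ℝ) ^ p.1 - 2 ^ p.2
  have hzero : (0 : ℝ) ∉ (Icc 1 n).offDiag.image f := by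
    simp only [f, mem_image, mem_offDiag, sub_eq_zero, Prod.exists, not_exists, not_and]
    exact fun i j hij h => hij.2.2 (pow_right_injective₀ zero_lt_two (by norm_num : (2 : ℝ) ≠ 1) h)
  have hsub : insert 0 ((Icc 1 n).offDiag.image f) ⊆ diffSet (powersOfTwo n) := by
    refine insert_subset (mem_diffSet_powersOfTwo.2 ⟨1, ?_, 1, ?_, sub_self _⟩) ?_
    · simpa using hn
    · simpa using hn
    intro x hx
    obtain ⟨⟨i, j⟩, hp, rfl⟩ := mem_image.1 hx
    rw [mem_offDiag] at hp
    exact mem_diffSet_powersOfTwo.2 ⟨i, hp.1, j, hp.2.1, rfl⟩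
  have hinj : Set.InjOn f ((Icc 1 n).offDiag : Set (ℕ × ℕ)) :=
    two_pow_sub_two_pow_injOn.mono fun p hp => (mem_offDiag.1 hp).2.2
  calc n * n - n + 1 = #((Icc 1 n).offDiag.image f) + 1 := by
        rw [card_image_of_injOn hinj, offDiag_card, Nat.card_Icc, Nat.add_sub_cancel]
    _ = #(insert 0 ((Icc 1 n).offDiag.image f)) := (card_insert_of_notMem hzero).symm
    _ ≤ #(diffSet (powersOfTwo n)) := card_le_card hsub

lemma card_diffSet_le (A : Finset ℝ) : #(diffSet A) ≤ #A * #A := by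
  rw [diffSet_eq_sub]
  exact card_sub_le

lemma card_powersOfTwo_le (n : ℕ) : #(powersOfTwo n) ≤ n :=
  card_image_le.trans (by simp)

lemma card_twoPowSubOne_le (n : ℕ) : #(twoPowSubOne n) ≤ n :=
  card_image_le.trans (by simp)

lemma card_signs_mul_le : #(signs * signs) ≤ 2 := by
  refine (card_le_card (s := signs * signs) (t := signs) ?_).trans card_le_two
  simp only [signs, mul_subset_iff, mem_insert, mem_singleton]
  rintro x (rfl | rfl) y (rfl | rfl) <;> norm_num

lemma card_signs_div_le : #(signs / signs) ≤ 2 := by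
  refine (card_le_card (s := signs / signs) (t := signs) ?_).trans card_le_two
  simp only [signs, div_subset_iff, mem_insert, mem_singleton]
  rintro x (rfl | rfl) y (rfl | rfl) <;> norm_num

lemma card_powersOfTwo_mul_le (n : ℕ) : #(powersOfTwo n * powersOfTwo n) ≤ 2 * n + 1 := by
  have h : powersOfTwo n * powersOfTwo n ⊆ (range (2 * n + 1)).image fun k : ℕ => (2 : ℝ) ^ k := by
    simp only [powersOfTwo, mul_subset_iff, mem_image, mem_Icc, mem_range]
    rintro _ ⟨i, hi, rfl⟩ _ ⟨j, hj, rfl⟩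
    exact ⟨i + j, by omega, pow_add 2 i j⟩
  exact (card_le_card h).trans (card_image_le.trans (card_range _).le)

lemma card_powersOfTwo_div_le (n : ℕ) : #(powersOfTwo n / powersOfTwo n) ≤ 2 * n + 1 := by
  have h : powersOfTwo n / powersOfTwo n ⊆
      (Icc (-n : ℤ) n).image fun k : ℤ => (2 : ℝ) ^ k := by
    simp only [powersOfTwo, div_subset_iff, mem_image, mem_Icc]
    rintro _ ⟨i, hi, rfl⟩ _ ⟨j, hj, rfl⟩
    refine ⟨(i : ℤ) - j, by omega, ?_⟩
    rw [zpow_sub₀ two_ne_zero, zpow_natCast, zpow_natCast]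
  refine (card_le_card h).trans (card_image_le.trans ?_)
  rw [Int.card_Icc]
  omega

lemma card_mul_mul_mul_self_le {α : Type*} [DecidableEq α] [CommMonoid α] (U P Q : Finset α) :
    #((U * P * Q) * (U * P * Q)) ≤ #(U * U) * #(P * P) * #(Q * Q) := by
  rw [mul_mul_mul_comm, mul_mul_mul_comm U]
  exact card_mul_le.trans (Nat.mul_le_mul_right _ card_mul_le)

lemma card_mul_mul_div_self_le {α : Type*} [DecidableEq α] [DivisionCommMonoid α]
    (U P Q : Finset α) : #((U * P * Q) / (U * P * Q)) ≤ #(U / U) * #(P / P) * #(Q / Q) := by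
  rw [← div_mul_div_comm, ← div_mul_div_comm]
  exact card_mul_le.trans (Nat.mul_le_mul_right _ card_mul_le)

lemma card_prodSet_diffSet_powersOfTwo_le (n : ℕ) :
    #(prodSet (diffSet (powersOfTwo n)) (diffSet (powersOfTwo n))) ≤
      2 * (2 * n + 1) * (n * n) + 1 := by
  have h := diffSet_powersOfTwo_subset n
  calc _ ≤ #(insert 0 ((signs * powersOfTwo n * twoPowSubOne n) *
          (signs * powersOfTwo n * twoPowSubOne n))) :=
        card_le_card (prodSet_subset_insert_zero h h)
    _ ≤ #(signs * signs) * #(powersOfTwo n * powersOfTwo n) *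
          #(twoPowSubOne n * twoPowSubOne n) + 1 :=
        (card_insert_le _ _).trans (Nat.add_le_add_right (card_mul_mul_mul_self_le _ _ _) 1)
    _ ≤ 2 * (2 * n + 1) * (n * n) + 1 := by
        gcongr
        · exact card_signs_mul_le
        · exact card_powersOfTwo_mul_le n
        · exact card_mul_le.trans (Nat.mul_le_mul (card_twoPowSubOne_le n) (card_twoPowSubOne_le n))

lemma card_quotSet_diffSet_powersOfTwo_le (n : ℕ) :
    #(quotSet (diffSet (powersOfTwo n)) (diffSet (powersOfTwo n))) ≤
      2 * (2 * n + 1) * (n * n) + 1 := by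
  have h := diffSet_powersOfTwo_subset n
  calc _ ≤ #(insert 0 ((signs * powersOfTwo n * twoPowSubOne n) /
          (signs * powersOfTwo n * twoPowSubOne n))) :=
        card_le_card (quotSet_subset_insert_zero h h)
    _ ≤ #(signs / signs) * #(powersOfTwo n / powersOfTwo n) *
          #(twoPowSubOne n / twoPowSubOne n) + 1 :=
        (card_insert_le _ _).trans (Nat.add_le_add_right (card_mul_mul_div_self_le _ _ _) 1)
    _ ≤ 2 * (2 * n + 1) * (n * n) + 1 := by
        gcongr
        · exact card_signs_div_le
        · exact card_powersOfTwo_div_le n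
        · exact card_div_le.trans (Nat.mul_le_mul (card_twoPowSubOne_le n) (card_twoPowSubOne_le n))

lemma rpow_three_halves_eq_sqrt_pow_three {y : ℝ} (hy : 0 ≤ y) : y ^ ((3 : ℝ) / 2) = √(y ^ 3) := by
  rw [Real.sqrt_eq_rpow, ← Real.rpow_natCast, ← Real.rpow_mul hy]
  norm_num

lemma pow_three_div_three_le_rpow {x y : ℝ} (hx : 0 ≤ x) (hy : x ^ 2 / 2 ≤ y) :
    x ^ 3 / 3 ≤ y ^ ((3 : ℝ) / 2) := by
  have hy0 : 0 ≤ y := le_trans (by positivity) hy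
  rw [rpow_three_halves_eq_sqrt_pow_three hy0, Real.le_sqrt (by positivity) (by positivity)]
  calc (x ^ 3 / 3) ^ 2 ≤ (x ^ 2 / 2) ^ 3 := by
        have : 0 ≤ x ^ 6 := by positivity
        nlinarith
    _ ≤ y ^ 3 := pow_le_pow_left₀ (by positivity) hy 3

theorem stmt_7 (n : ℕ) (hn : 1 ≤ n)
    (A : Finset ℝ) (hA : A = (Finset.Icc 1 n).image (fun k : ℕ => (2 : ℝ) ^ k)) :
    (n : ℝ) ^ 2 / 2 ≤ ((diffSet A).card : ℝ) ∧
    ((diffSet A).card : ℝ) ≤ (n : ℝ) ^ 2 ∧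
    ((prodSet (diffSet A) (diffSet A)).card : ℝ) ≤
      25 * ((diffSet A).card : ℝ) ^ ((3 : ℝ) / 2) ∧
    ((quotSet (diffSet A) (diffSet A)).card : ℝ) ≤
      25 * ((diffSet A).card : ℝ) ^ ((3 : ℝ) / 2) := by
  obtain rfl : A = powersOfTwo n := hA
  have hn' : (1 : ℝ) ≤ n := by exact_mod_cast hn
  have hlow : (n : ℝ) ^ 2 / 2 ≤ #(diffSet (powersOfTwo n)) := by
    have h := card_diffSet_powersOfTwo_ge hn
    rw [← Nat.cast_le (α := ℝ), Nat.cast_add, Nat.cast_sub (Nat.le_mul_self n)] at h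
    push_cast at h
    nlinarith
  have hup : #(diffSet (powersOfTwo n)) ≤ n ^ 2 :=
    (card_diffSet_le _).trans <| (Nat.mul_le_mul (card_powersOfTwo_le n)
      (card_powersOfTwo_le n)).trans_eq (sq n).symm
  have hcube := pow_three_div_three_le_rpow (by positivity) hlow
  have hprod := card_prodSet_diffSet_powersOfTwo_le n
  have hquot := card_quotSet_diffSet_powersOfTwo_le n
  refine ⟨hlow, by exact_mod_cast hup, ?_, ?_⟩
  · rify at hprod
    nlinarith
  · rify at hquot
    nlinarith
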